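/- Let A₂ : 𝕋² → 𝕋² be the map A₂(x, y) = (x, x + y), and suppose A₂ satisfies the strong u-MOMO property for a bounded sequence u : ℕ → 𝔻. Then the infinite Cartesian product R := A₂^{×ℕ} acting on (𝕋²)^ℕ also satisfies the strong u-MOMO property. More precisely, for every character χ of (𝕋²)^ℕ depending on finitely many coordinates, say χ((x_j, y_j)_j) = e^{2πi(∑_{j≤t} α_j x_j + ∑_{j≤t} β_j y_j)} with α_j, β_j ∈ ℤ, every increasing (b_k) with b_{k+1} − b_k → ∞, and all points ((x_j^{(k)}, y_j^{(k)})_j)_k, the block averages (1/b_K) ∑_{k≤K} |∑_{b_k ≤ n < b_{k+1}} χ(Rⁿ(·)) u(n)| tend to 0. -/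

import Mathlib

open Filter Topology

/-- The strong `u`-MOMO property of a topological dynamical system `(X, T)`. -/
def StrongMOMO {X : Type*} [TopologicalSpace X] (u : ℕ → ℂ) (T : X → X) : Prop :=
  ∀ b : ℕ → ℕ, StrictMono b → Tendsto (fun k => b (k + 1) - b k) atTop atTop →
    ∀ f : X → ℂ, Continuous f → ∀ x : ℕ → X,
      Tendsto (fun K => (1 / (b K : ℝ)) * ∑ k ∈ Finset.range K,
          norm (∑ n ∈ Finset.Ico (b k) (b (k + 1)), u n * f (T^[n - b k] (x k))))
        atTop (𝓝 0)

/-- The affine map `A₂(x, y) = (x, x + y)` on `𝕋²`. -/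
noncomputable def A2 : AddCircle (1 : ℝ) × AddCircle (1 : ℝ) →
    AddCircle (1 : ℝ) × AddCircle (1 : ℝ) :=
  fun p => (p.1, p.1 + p.2)

/-- The infinite Cartesian product `R = A₂^{×ℕ}` on `(𝕋²)^ℕ`. -/
noncomputable def prodA2 : (ℕ → AddCircle (1 : ℝ) × AddCircle (1 : ℝ)) →
    (ℕ → AddCircle (1 : ℝ) × AddCircle (1 : ℝ)) :=
  fun z j => A2 (z j)

/-- The character of `(𝕋²)^ℕ` depending on the first `t` coordinates, with frequencies
`α_j, β_j ∈ ℤ`:  `χ((x_j, y_j)_j) = e^{2πi (∑_{j<t} α_j x_j + ∑_{j<t} β_j y_j)}`. -/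
noncomputable def char18 (t : ℕ) (α β : ℕ → ℤ)
    (z : ℕ → AddCircle (1 : ℝ) × AddCircle (1 : ℝ)) : ℂ :=
  ∏ j ∈ Finset.range t,
    ((AddCircle.toCircle ((α j) • (z j).1) : ℂ) * (AddCircle.toCircle ((β j) • (z j).2) : ℂ))

local notation "𝕋" => AddCircle (1 : ℝ)

lemma A2_iterate (m : ℕ) (p : 𝕋 × 𝕋) : A2^[m] p = (p.1, m • p.1 + p.2) := by
  induction m with
  | zero => simp
  | succ n ih => rw [Function.iterate_succ_apply', ih, A2]
                 simp [succ_nsmul]; abel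

lemma prodA2_iterate (m : ℕ) (z : ℕ → 𝕋 × 𝕋) (j : ℕ) :
    prodA2^[m] z j = A2^[m] (z j) := by
  induction m with
  | zero => simp
  | succ n ih => rw [Function.iterate_succ_apply', Function.iterate_succ_apply', prodA2, ih]

lemma prod_toCircle {s : Finset ℕ} (g : ℕ → 𝕋) :
    ∏ j ∈ s, (AddCircle.toCircle (g j) : ℂ) = (AddCircle.toCircle (∑ j ∈ s, g j) : ℂ) := by
  induction s using Finset.cons_induction with
  | empty => simp [AddCircle.toCircle_zero]
  | cons a s ha ih => rw [Finset.prod_cons, Finset.sum_cons, AddCircle.toCircle_add, ih, Circle.coe_mul]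

lemma continuous_char18 (t : ℕ) (α β : ℕ → ℤ) : Continuous (char18 t α β) := by
  apply continuous_finset_prod
  intro j _
  apply Continuous.mul
  · exact continuous_subtype_val.comp (AddCircle.continuous_toCircle.comp
      ((continuous_zsmul (α j)).comp (continuous_fst.comp (continuous_apply j))))
  · exact continuous_subtype_val.comp (AddCircle.continuous_toCircle.comp
      ((continuous_zsmul (β j)).comp (continuous_snd.comp (continuous_apply j))))

lemma abs_char18 (t : ℕ) (α β : ℕ → ℤ) (z : ℕ → 𝕋 × 𝕋) :
    norm (char18 t α β z) = 1 := by
  unfold char18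
  rw [norm_prod]
  apply Finset.prod_eq_one
  intro j _
  rw [norm_mul, Circle.norm_coe, Circle.norm_coe, one_mul]

lemma char18_iterate (t : ℕ) (α β : ℕ → ℤ) (m : ℕ) (z : ℕ → 𝕋 × 𝕋) :
    char18 t α β (prodA2^[m] z) =
      char18 t α β z *
        (AddCircle.toCircle (m • ∑ j ∈ Finset.range t, (β j) • (z j).1) : ℂ) := by
  unfold char18
  rw [Finset.smul_sum, ← prod_toCircle, ← Finset.prod_mul_distrib]
  apply Finset.prod_congr rfl
  intro j _
  rw [prodA2_iterate, A2_iterate]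
  have h2 : (β j) • (m • (z j).1 + (z j).2) = (β j) • (z j).2 + m • ((β j) • (z j).1) := by
    rw [smul_add, smul_comm]; abel
  rw [h2, AddCircle.toCircle_add, Circle.coe_mul]
  ring

lemma char18_pad (t T : ℕ) (hT : t ≤ T) (α β : ℕ → ℤ) (z : ℕ → 𝕋 × 𝕋) :
    char18 t α β z =
      char18 T (fun j => if j < t then α j else 0) (fun j => if j < t then β j else 0) z := by
  unfold char18
  have : ∀ j ∈ Finset.range T,
      ((AddCircle.toCircle ((if j < t then α j else 0) • (z j).1) : ℂ) *
        (AddCircle.toCircle ((if j < t then β j else 0) • (z j).2) : ℂ)) =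
      if j < t then ((AddCircle.toCircle ((α j) • (z j).1) : ℂ) *
        (AddCircle.toCircle ((β j) • (z j).2) : ℂ)) else 1 := by
    intro j _
    split <;> simp [AddCircle.toCircle_zero]
  rw [Finset.prod_congr rfl this, ← Finset.prod_filter]
  congr 1
  ext j
  simp only [Finset.mem_filter, Finset.mem_range]
  omega

lemma char18_mul (t t' : ℕ) (α β α' β' : ℕ → ℤ) (z : ℕ → 𝕋 × 𝕋) :
    char18 t α β z * char18 t' α' β' z =
      char18 (max t t')
        (fun j => (if j < t then α j else 0) + (if j < t' then α' j else 0))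
        (fun j => (if j < t then β j else 0) + (if j < t' then β' j else 0)) z := by
  rw [char18_pad t (max t t') (le_max_left _ _) α β,
      char18_pad t' (max t t') (le_max_right _ _) α' β']
  unfold char18
  rw [← Finset.prod_mul_distrib]
  apply Finset.prod_congr rfl
  intro j _
  rw [add_smul, add_smul, AddCircle.toCircle_add, AddCircle.toCircle_add,
      Circle.coe_mul, Circle.coe_mul]
  ring

abbrev XX : Type := ℕ → 𝕋 × 𝕋

noncomputable def charCM (t : ℕ) (α β : ℕ → ℤ) : C(XX, ℂ) :=
  ⟨char18 t α β, continuous_char18 t α β⟩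

def charSet : Set C(XX, ℂ) := {F | ∃ t α β, F = charCM t α β}

lemma one_mem_charSet : (1 : C(XX, ℂ)) ∈ charSet :=
  ⟨0, 0, 0, by ext z; simp [charCM, char18]⟩

lemma mul_mem_charSet {F G : C(XX, ℂ)} (hF : F ∈ charSet) (hG : G ∈ charSet) :
    F * G ∈ charSet := by
  obtain ⟨t, α, β, rfl⟩ := hF
  obtain ⟨t', α', β', rfl⟩ := hG
  exact ⟨max t t', _, _, by ext z; exact char18_mul t t' α β α' β' z⟩

lemma star_charCM (t : ℕ) (α β : ℕ → ℤ) :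
    star (charCM t α β) = charCM t (-α) (-β) := by
  ext z
  simp only [ContinuousMap.star_apply, charCM, ContinuousMap.coe_mk, char18]
  rw [show (star : ℂ → ℂ) = (starRingEnd ℂ) from rfl, map_prod]
  apply Finset.prod_congr rfl
  intro j _
  rw [map_mul]
  congr 1
  · rw [Pi.neg_apply, neg_smul, fourier_neg', fourier_apply]
  · rw [Pi.neg_apply, neg_smul, fourier_neg', fourier_apply]

noncomputable def charAlg : StarSubalgebra ℂ C(XX, ℂ) where
  toSubalgebra := Algebra.adjoin ℂ charSet
  star_mem' := by
    intro F hF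
    have h : Algebra.adjoin ℂ charSet ≤ star (Algebra.adjoin ℂ charSet) := by
      refine Algebra.adjoin_le ?_
      rintro - ⟨t, α, β, rfl⟩
      show charCM t α β ∈ star (Algebra.adjoin ℂ charSet)
      rw [Subalgebra.mem_star_iff, star_charCM]
      exact Algebra.subset_adjoin ⟨t, -α, -β, rfl⟩
    exact (Subalgebra.mem_star_iff _ _).mp (h hF)

lemma char18_delta_fst (j : ℕ) (z : XX) :
    char18 (j + 1) (fun i => if i = j then 1 else 0) 0 z = (AddCircle.toCircle (z j).1 : ℂ) := by
  unfold char18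
  rw [Finset.prod_eq_single j]
  · simp [AddCircle.toCircle_zero]
  · intro i _ hij
    simp [hij, AddCircle.toCircle_zero]
  · intro h
    exact absurd (Finset.self_mem_range_succ j) h

lemma char18_delta_snd (j : ℕ) (z : XX) :
    char18 (j + 1) 0 (fun i => if i = j then 1 else 0) z = (AddCircle.toCircle (z j).2 : ℂ) := by
  unfold char18
  rw [Finset.prod_eq_single j]
  · simp [AddCircle.toCircle_zero]
  · intro i _ hij
    simp [hij, AddCircle.toCircle_zero]
  · intro h
    exact absurd (Finset.self_mem_range_succ j) h

lemma charAlg_separates : charAlg.toSubalgebra.SeparatesPoints := by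
  intro z w hzw
  have hj : ∃ j, z j ≠ w j := by
    by_contra h
    push_neg at h
    exact hzw (funext h)
  obtain ⟨j, hj⟩ := hj
  have : (z j).1 ≠ (w j).1 ∨ (z j).2 ≠ (w j).2 := by
    by_contra h
    push_neg at h
    exact hj (Prod.ext h.1 h.2)
  rcases this with h1 | h2
  · refine ⟨_, ⟨charCM (j+1) (fun i => if i = j then 1 else 0) 0,
      Algebra.subset_adjoin ⟨_, _, _, rfl⟩, rfl⟩, ?_⟩
    show char18 _ _ _ z ≠ char18 _ _ _ w
    rw [char18_delta_fst, char18_delta_fst]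
    intro h
    exact h1 (AddCircle.injective_toCircle one_ne_zero (Subtype.coe_injective h))
  · refine ⟨_, ⟨charCM (j+1) 0 (fun i => if i = j then 1 else 0),
      Algebra.subset_adjoin ⟨_, _, _, rfl⟩, rfl⟩, ?_⟩
    show char18 _ _ _ z ≠ char18 _ _ _ w
    rw [char18_delta_snd, char18_delta_snd]
    intro h
    exact h2 (AddCircle.injective_toCircle one_ne_zero (Subtype.coe_injective h))

lemma charAlg_closure_top : charAlg.topologicalClosure = ⊤ :=
  ContinuousMap.starSubalgebra_topologicalClosure_eq_top_of_separatesPoints _ charAlg_separates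

lemma charAlg_coe_span :
    Subalgebra.toSubmodule charAlg.toSubalgebra = Submodule.span ℂ charSet := by
  apply Algebra.adjoin_eq_span_of_subset
  refine Set.Subset.trans ?_ Submodule.subset_span
  intro x hx
  exact Submonoid.closure_induction (fun _ => id) one_mem_charSet
    (fun a b _ _ ha hb => mul_mem_charSet ha hb) hx

noncomputable def bavg (u : ℕ → ℂ) (b : ℕ → ℕ) (x : ℕ → XX) (f : XX → ℂ) (K : ℕ) : ℝ :=
  (1 / (b K : ℝ)) * ∑ k ∈ Finset.range K,
    norm (∑ n ∈ Finset.Ico (b k) (b (k + 1)), u n * f (prodA2^[n - b k] (x k)))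

def good (u : ℕ → ℂ) (f : XX → ℂ) : Prop :=
  ∀ b : ℕ → ℕ, StrictMono b → Tendsto (fun k => b (k + 1) - b k) atTop atTop →
    ∀ x : ℕ → XX, Tendsto (bavg u b x f) atTop (𝓝 0)

lemma bavg_nonneg (u : ℕ → ℂ) (b : ℕ → ℕ) (x : ℕ → XX) (f : XX → ℂ) (K : ℕ) :
    0 ≤ bavg u b x f K := by
  unfold bavg
  apply mul_nonneg
  · positivity
  · exact Finset.sum_nonneg fun k _ => norm_nonneg _

lemma good_zero (u : ℕ → ℂ) : good u (0 : C(XX, ℂ)) := by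
  intro b hb hb2 x
  have : bavg u b x (0 : C(XX, ℂ)) = fun _ => 0 := by
    funext K
    unfold bavg
    simp
  rw [this]
  exact tendsto_const_nhds

lemma good_add (u : ℕ → ℂ) {F G : C(XX, ℂ)} (hF : good u F) (hG : good u G) :
    good u (F + G) := by
  intro b hb hb2 x
  have key : ∀ K, bavg u b x (F + G) K ≤ bavg u b x F K + bavg u b x G K := by
    intro K
    unfold bavg
    rw [← mul_add, ← Finset.sum_add_distrib]
    apply mul_le_mul_of_nonneg_left _ (by positivity)
    apply Finset.sum_le_sum
    intro k _
    have : ∑ n ∈ Finset.Ico (b k) (b (k + 1)), u n * (⇑F + ⇑G) (prodA2^[n - b k] (x k)) =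
        (∑ n ∈ Finset.Ico (b k) (b (k + 1)), u n * F (prodA2^[n - b k] (x k))) +
        (∑ n ∈ Finset.Ico (b k) (b (k + 1)), u n * G (prodA2^[n - b k] (x k))) := by
      rw [← Finset.sum_add_distrib]
      apply Finset.sum_congr rfl
      intro n _
      simp only [Pi.add_apply]
      ring
    rw [this]
    exact norm_add_le _ _
  have h0 : ∀ K, 0 ≤ bavg u b x (F + G) K := bavg_nonneg u b x _
  have := (hF b hb hb2 x).add (hG b hb hb2 x)
  rw [add_zero] at this
  exact squeeze_zero h0 key this

lemma good_smul (u : ℕ → ℂ) (c : ℂ) {F : C(XX, ℂ)} (hF : good u F) : good u (c • F) := by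
  intro b hb hb2 x
  have key : ∀ K, bavg u b x (c • F) K = norm c * bavg u b x F K := by
    intro K
    unfold bavg
    have h1 : ∀ k ∈ Finset.range K,
        norm (∑ n ∈ Finset.Ico (b k) (b (k + 1)),
          u n * (c • ⇑F) (prodA2^[n - b k] (x k))) =
        norm c * norm (∑ n ∈ Finset.Ico (b k) (b (k + 1)),
          u n * F (prodA2^[n - b k] (x k))) := by
      intro k _
      have : ∑ n ∈ Finset.Ico (b k) (b (k + 1)), u n * (c • ⇑F) (prodA2^[n - b k] (x k)) =
          c * ∑ n ∈ Finset.Ico (b k) (b (k + 1)), u n * F (prodA2^[n - b k] (x k)) := by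
        rw [Finset.mul_sum]
        apply Finset.sum_congr rfl
        intro n _
        simp only [Pi.smul_apply, smul_eq_mul]
        ring
      rw [this, norm_mul]
    rw [Finset.sum_congr rfl h1, ← Finset.mul_sum]
    ring
  have := (hF b hb hb2 x).const_mul (norm c)
  rw [mul_zero] at this
  exact Tendsto.congr (fun K => (key K).symm) this

lemma bavg_le_of_norm (u : ℕ → ℂ) (hu : ∀ n, norm (u n) ≤ 1) {b : ℕ → ℕ}
    (hb : StrictMono b) (x : ℕ → XX) (F G : C(XX, ℂ)) {K : ℕ} (hK : 1 ≤ K) :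
    bavg u b x F K ≤ bavg u b x G K + ‖F - G‖ := by
  have hbK : 0 < (b K : ℝ) := by
    have h1 : 1 ≤ b K := le_trans hK hb.le_apply
    exact_mod_cast Nat.lt_of_lt_of_le Nat.zero_lt_one h1
  have step1 : ∀ k ∈ Finset.range K,
      norm (∑ n ∈ Finset.Ico (b k) (b (k + 1)), u n * F (prodA2^[n - b k] (x k))) ≤
      norm (∑ n ∈ Finset.Ico (b k) (b (k + 1)), u n * G (prodA2^[n - b k] (x k))) +
        ((b (k + 1) : ℝ) - (b k : ℝ)) * ‖F - G‖ := by
    intro k _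
    have hsplit : ∑ n ∈ Finset.Ico (b k) (b (k + 1)), u n * F (prodA2^[n - b k] (x k)) =
        (∑ n ∈ Finset.Ico (b k) (b (k + 1)), u n * G (prodA2^[n - b k] (x k))) +
        (∑ n ∈ Finset.Ico (b k) (b (k + 1)),
          u n * (F (prodA2^[n - b k] (x k)) - G (prodA2^[n - b k] (x k)))) := by
      rw [← Finset.sum_add_distrib]
      apply Finset.sum_congr rfl
      intro n _
      ring
    rw [hsplit]
    refine le_trans (norm_add_le _ _) (add_le_add_right ?_ _)
    refine le_trans (norm_sum_le _ _) ?_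
    have hterm : ∀ n ∈ Finset.Ico (b k) (b (k + 1)),
        norm (u n * (F (prodA2^[n - b k] (x k)) - G (prodA2^[n - b k] (x k)))) ≤
        ‖F - G‖ := by
      intro n _
      rw [norm_mul]
      have h2 : norm (F (prodA2^[n - b k] (x k)) - G (prodA2^[n - b k] (x k))) ≤
          ‖F - G‖ := by
        have := ContinuousMap.norm_coe_le_norm (F - G) (prodA2^[n - b k] (x k))
        rw [ContinuousMap.sub_apply] at this
        exact this
      calc norm (u n) * norm (F (prodA2^[n - b k] (x k)) -
              G (prodA2^[n - b k] (x k)))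
          ≤ 1 * ‖F - G‖ := by
            apply mul_le_mul (hu n) h2 (norm_nonneg _) zero_le_one
        _ = ‖F - G‖ := one_mul _
    refine le_trans (Finset.sum_le_sum hterm) ?_
    rw [Finset.sum_const, Nat.card_Ico, nsmul_eq_mul,
      Nat.cast_sub (hb (Nat.lt_succ_self k)).le]
  calc bavg u b x F K
      ≤ (1 / (b K : ℝ)) * ∑ k ∈ Finset.range K,
          (norm (∑ n ∈ Finset.Ico (b k) (b (k + 1)),
            u n * G (prodA2^[n - b k] (x k))) +
          ((b (k + 1) : ℝ) - (b k : ℝ)) * ‖F - G‖) := by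
        unfold bavg
        exact mul_le_mul_of_nonneg_left (Finset.sum_le_sum step1) (by positivity)
    _ = bavg u b x G K + (1 / (b K : ℝ)) * (((b K : ℝ) - (b 0 : ℝ)) * ‖F - G‖) := by
        unfold bavg
        rw [Finset.sum_add_distrib, mul_add]
        congr 1
        rw [← Finset.sum_mul, Finset.sum_range_sub (fun k => (b k : ℝ))]
    _ ≤ bavg u b x G K + ‖F - G‖ := by
        apply add_le_add_right
        have h4 : (1 / (b K : ℝ)) * (b K : ℝ) = 1 := one_div_mul_cancel hbK.ne'
        have h5 : (0 : ℝ) ≤ ‖F - G‖ := norm_nonneg _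
        have h6 : (0 : ℝ) ≤ (b 0 : ℝ) := Nat.cast_nonneg _
        have h7 : (0 : ℝ) ≤ 1 / (b K : ℝ) := by positivity
        nlinarith [mul_nonneg (mul_nonneg h7 h6) h5]

lemma good_closed (u : ℕ → ℂ) (hu : ∀ n, norm (u n) ≤ 1) :
    IsClosed {F : C(XX, ℂ) | good u ⇑F} := by
  refine isClosed_of_closure_subset ?_
  intro F hF b hb hb2 x
  rw [Metric.tendsto_atTop]
  intro ε hε
  obtain ⟨G, hGmem, hdist⟩ := Metric.mem_closure_iff.mp hF (ε / 2) (by linarith)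
  have hG := hGmem b hb hb2 x
  rw [Metric.tendsto_atTop] at hG
  obtain ⟨N, hN⟩ := hG (ε / 2) (by linarith)
  refine ⟨max N 1, fun K hK => ?_⟩
  have hK1 : 1 ≤ K := le_trans (le_max_right N 1) hK
  have hKN : N ≤ K := le_trans (le_max_left N 1) hK
  have h1 := bavg_le_of_norm u hu hb x F G hK1
  have h2 := hN K hKN
  rw [Real.dist_eq, sub_zero, abs_of_nonneg (bavg_nonneg u b x _ K)] at h2 ⊢
  have h3 : ‖F - G‖ = dist F G := (dist_eq_norm F G).symm
  linarith

lemma good_char (u : ℕ → ℂ) (hA2 : StrongMOMO u A2) (t : ℕ) (α β : ℕ → ℤ) :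
    good u (char18 t α β) := by
  intro b hb hb2 x
  have hfc : Continuous (fun p : 𝕋 × 𝕋 => (AddCircle.toCircle p.2 : ℂ)) :=
    continuous_subtype_val.comp (AddCircle.continuous_toCircle.comp continuous_snd)
  have H := hA2 b hb hb2 _ hfc (fun k => (∑ j ∈ Finset.range t, β j • (x k j).1, 0))
  refine Tendsto.congr ?_ H
  intro K
  unfold bavg
  congr 1
  apply Finset.sum_congr rfl
  intro k _
  have key : ∑ n ∈ Finset.Ico (b k) (b (k + 1)), u n * char18 t α β (prodA2^[n - b k] (x k)) =
      char18 t α β (x k) * ∑ n ∈ Finset.Ico (b k) (b (k + 1)),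
        u n * (AddCircle.toCircle
          (A2^[n - b k] ((∑ j ∈ Finset.range t, β j • (x k j).1, 0) : 𝕋 × 𝕋)).2 : ℂ) := by
    rw [Finset.mul_sum]
    apply Finset.sum_congr rfl
    intro n _
    rw [char18_iterate, A2_iterate]
    show u n * (char18 t α β (x k) * _) = _
    rw [add_zero]
    ring
  rw [key, norm_mul, abs_char18, one_mul]

/-- **Strong `u`-MOMO for `A₂` passes to its infinite Cartesian product.**
If `A₂ : (x, y) ↦ (x, x + y)` on `𝕋²` satisfies the strong `u`-MOMO property for a bounded
sequence `u : ℕ → 𝔻`, then so does the infinite Cartesian product `R = A₂^{×ℕ}`; more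
precisely, for every character `χ` of `(𝕋²)^ℕ` depending on finitely many coordinates, every
increasing `(b_k)` with `b_{k+1} - b_k → ∞` and every choice of points, the block averages
`(1/b_K) ∑_{k≤K} |∑_{b_k ≤ n < b_{k+1}} χ(Rⁿ ·) u(n)|` tend to `0`. -/
theorem stmt_18 (u : ℕ → ℂ) (hu : ∀ n, norm (u n) ≤ 1)
    (hA2 : StrongMOMO u A2) :
    StrongMOMO u prodA2 ∧
    ∀ (t : ℕ) (α β : ℕ → ℤ) (b : ℕ → ℕ), StrictMono b →
      Tendsto (fun k => b (k + 1) - b k) atTop atTop →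
      ∀ z : ℕ → (ℕ → AddCircle (1 : ℝ) × AddCircle (1 : ℝ)),
        Tendsto (fun K => (1 / (b K : ℝ)) * ∑ k ∈ Finset.range K,
            norm (∑ n ∈ Finset.Ico (b k) (b (k + 1)),
              u n * char18 t α β (prodA2^[n] (z k)))) atTop (𝓝 0) := by
  have hgood : ∀ F : C(XX, ℂ), good u ⇑F := by
    intro F
    have htop : F ∈ charAlg.topologicalClosure := by rw [charAlg_closure_top]; trivial
    have hcl : F ∈ closure (charAlg : Set C(XX, ℂ)) := htop
    refine closure_minimal ?_ (good_closed u hu) hcl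
    intro G hG
    have hspan : G ∈ Submodule.span ℂ charSet := by
      rw [← charAlg_coe_span]
      exact hG
    refine Submodule.span_induction ?_ ?_ ?_ ?_ hspan
    · rintro g ⟨t, α, β, rfl⟩
      exact good_char u hA2 t α β
    · exact good_zero u
    · exact fun a c _ _ ha hc => good_add u ha hc
    · exact fun c a _ ha => good_smul u c ha
  constructor
  · intro b hb hb2 f hf x
    exact hgood ⟨f, hf⟩ b hb hb2 x
  · intro t α β b hb hb2 z
    have H := good_char u hA2 t α β b hb hb2 (fun k => prodA2^[b k] (z k))
    refine Tendsto.congr ?_ H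
    intro K
    unfold bavg
    congr 1
    apply Finset.sum_congr rfl
    intro k _
    congr 1
    apply Finset.sum_congr rfl
    intro n hn
    congr 1
    rw [← Function.iterate_add_apply, Nat.sub_add_cancel (Finset.mem_Ico.mp hn).1]
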